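/- Let {X_λ : λ ∈ Λ} be a nonempty family of nonzero Banach spaces (all over the same scalar field). Then the numerical index of the c₀-sum, of the ℓ₁-sum, and of the ℓ_∞-sum of the family all coincide with inf_λ n(X_λ). -/

import Mathlib

open MeasureTheory NormedSpace Metric Filter
open scoped ENNReal NNReal Topology

/-- The numerical radius of a bounded linear operator `T` on a normed space `X`:
`v(T) = sup {‖x*(Tx)‖ : ‖x‖ = ‖x*‖ = x*(x) = 1}`. -/
noncomputable def numRadius (𝕜 : Type*) [RCLike 𝕜] (X : Type*) [NormedAddCommGroup X]
    [NormedSpace 𝕜 X] (T : X →L[𝕜] X) : ℝ :=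
  sSup {r : ℝ | ∃ (x : X) (f : StrongDual 𝕜 X),
    ‖x‖ = 1 ∧ ‖f‖ = 1 ∧ f x = 1 ∧ r = ‖f (T x)‖}

/-- The numerical index of a normed space `X`:
`n(X) = inf {v(T) : T ∈ L(X), ‖T‖ = 1}`. -/
noncomputable def numIndex (𝕜 : Type*) [RCLike 𝕜] (X : Type*) [NormedAddCommGroup X]
    [NormedSpace 𝕜 X] : ℝ :=
  sInf {r : ℝ | ∃ T : X →L[𝕜] X, ‖T‖ = 1 ∧ r = numRadius 𝕜 X T}

/-- The `c₀`-sum of a family of normed spaces, realized as the closed subspace of the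
`ℓ_∞`-sum consisting of those families `(x_i)` whose norms `(‖x_i‖)` vanish at infinity. -/
noncomputable def c0Sum (𝕜 : Type*) [RCLike 𝕜] {ι : Type*} (E : ι → Type*)
    [∀ i, NormedAddCommGroup (E i)] [∀ i, NormedSpace 𝕜 (E i)] : Submodule 𝕜 (lp E ∞) where
  carrier := {f | Filter.Tendsto (fun i => ‖f i‖) Filter.cofinite (𝓝 0)}
  add_mem' := by
    intro f g hf hg
    have h : Filter.Tendsto (fun i => ‖f i‖ + ‖g i‖) Filter.cofinite (𝓝 0) := by
      simpa using hf.add hg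
    refine squeeze_zero (fun i => norm_nonneg _) (fun i => ?_) h
    simpa [lp.coeFn_add] using norm_add_le (f i) (g i)
  zero_mem' := by
    have h : (fun i => ‖(0 : lp E ∞) i‖) = fun _ => (0 : ℝ) := by
      funext i
      simp [lp.coeFn_zero]
    simpa [Set.mem_setOf_eq, h] using (tendsto_const_nhds :
      Filter.Tendsto (fun _ : ι => (0 : ℝ)) Filter.cofinite (𝓝 0))
  smul_mem' := by
    intro c f hf
    have h : Filter.Tendsto (fun i => ‖c‖ * ‖f i‖) Filter.cofinite (𝓝 0) := by
      simpa using hf.const_mul ‖c‖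
    refine squeeze_zero (fun i => norm_nonneg _) (fun i => ?_) h
    simp [lp.coeFn_smul, norm_smul]

/-!
Each summand `E i` sits in the sum `X` as an M-summand (for `c₀` and `ℓ_∞`) or an L-summand
(for `ℓ₁`), with inclusion `J` and projection `P`. Since the norming functionals of such a
decomposition split compatibly with it, `S ↦ J S P` preserves the norm and does not increase the
numerical radius, whence `n(X) ≤ n(E i)`. Conversely, an operator `T` of norm one on `X` is
compressed to `Ψ T Φ` on one summand, where `Φ` is an isometric section of a contractive
retraction `Ψ`; compressions never increase the numerical radius, and perturbing `J` (M-case)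
or `P` (L-case) by a rank-one map makes `‖Ψ T Φ‖` almost `1`. Hence
`(1 - ε) n(E i) ≤ v(Ψ T Φ) ≤ v(T)`.
-/

section NumericalRadius

variable {𝕜 : Type*} [RCLike 𝕜] {X : Type*} [NormedAddCommGroup X] [NormedSpace 𝕜 X]

theorem norm_eq_one_of_apply_eq_one {x : X} {f : StrongDual 𝕜 X} (hx : ‖x‖ ≤ 1) (hf : ‖f‖ ≤ 1)
    (hfx : f x = 1) : ‖x‖ = 1 ∧ ‖f‖ = 1 := by
  have h := f.le_opNorm x
  rw [hfx, norm_one] at h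
  constructor <;> nlinarith [norm_nonneg x, norm_nonneg f]

theorem norm_apply_le_numRadius (T : X →L[𝕜] X) {x : X} {f : StrongDual 𝕜 X} (hx : ‖x‖ ≤ 1)
    (hf : ‖f‖ ≤ 1) (hfx : f x = 1) : ‖f (T x)‖ ≤ numRadius 𝕜 X T := by
  obtain ⟨hx, hf⟩ := norm_eq_one_of_apply_eq_one hx hf hfx
  refine le_csSup ⟨‖T‖, ?_⟩ ⟨x, f, hx, hf, hfx, rfl⟩
  rintro _ ⟨x, f, hx, hf, -, rfl⟩
  calc ‖f (T x)‖ ≤ ‖f‖ * (‖T‖ * ‖x‖) := f.le_opNorm_of_le (T.le_opNorm x)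
    _ = ‖T‖ := by rw [hx, hf, one_mul, mul_one]

theorem numRadius_nonneg (T : X →L[𝕜] X) : 0 ≤ numRadius 𝕜 X T :=
  Real.sSup_nonneg (by rintro _ ⟨x, f, -, -, -, rfl⟩; exact norm_nonneg _)

theorem numRadius_le {T : X →L[𝕜] X} {c : ℝ} (hc : 0 ≤ c)
    (h : ∀ (x : X) (f : StrongDual 𝕜 X), ‖x‖ = 1 → ‖f‖ = 1 → f x = 1 → ‖f (T x)‖ ≤ c) :
    numRadius 𝕜 X T ≤ c :=
  Real.sSup_le (by rintro _ ⟨x, f, hx, hf, hfx, rfl⟩; exact h x f hx hf hfx) hc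

theorem numRadius_smul_le (c : 𝕜) (T : X →L[𝕜] X) :
    numRadius 𝕜 X (c • T) ≤ ‖c‖ * numRadius 𝕜 X T :=
  numRadius_le (by have := numRadius_nonneg T; positivity) fun x f hx hf hfx => by
    rw [smul_apply, map_smul, smul_eq_mul, norm_mul]
    gcongr
    exact norm_apply_le_numRadius T hx.le hf.le hfx

theorem norm_apply_le_mul_numRadius (T : X →L[𝕜] X) {x : X} {f : StrongDual 𝕜 X}
    (hfx : f x = ((‖f‖ * ‖x‖ : ℝ) : 𝕜)) : ‖f (T x)‖ ≤ ‖f‖ * ‖x‖ * numRadius 𝕜 X T := by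
  rcases eq_or_ne f 0 with rfl | hf
  · simp
  rcases eq_or_ne x 0 with rfl | hx
  · simp
  have hf' : (‖f‖ : 𝕜) ≠ 0 := by simpa using hf
  have hx' : (‖x‖ : 𝕜) ≠ 0 := by simpa using hx
  calc ‖f (T x)‖ = ‖f‖ * ‖x‖ * ‖((‖f‖⁻¹ : 𝕜) • f) (T ((‖x‖⁻¹ : 𝕜) • x))‖ := by
        simp [field]
    _ ≤ ‖f‖ * ‖x‖ * numRadius 𝕜 X T := by
        gcongr
        refine norm_apply_le_numRadius T (norm_smul_inv_norm hx).le (norm_smul_inv_norm hf).le ?_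
        simp only [smul_apply, map_smul, smul_eq_mul, hfx]
        push_cast
        field_simp

theorem numIndex_nonneg : 0 ≤ numIndex 𝕜 X :=
  Real.sInf_nonneg (by rintro _ ⟨T, -, rfl⟩; exact numRadius_nonneg T)

theorem numIndex_le_numRadius {T : X →L[𝕜] X} (hT : ‖T‖ = 1) : numIndex 𝕜 X ≤ numRadius 𝕜 X T :=
  csInf_le ⟨0, by rintro _ ⟨T, -, rfl⟩; exact numRadius_nonneg T⟩ ⟨T, hT, rfl⟩

theorem numIndex_mul_norm_le_numRadius (T : X →L[𝕜] X) :
    numIndex 𝕜 X * ‖T‖ ≤ numRadius 𝕜 X T := by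
  rcases eq_or_ne T 0 with rfl | hT
  · simpa using numRadius_nonneg (0 : X →L[𝕜] X)
  calc numIndex 𝕜 X * ‖T‖ ≤ numRadius 𝕜 X ((‖T‖⁻¹ : 𝕜) • T) * ‖T‖ := by
        gcongr; exact numIndex_le_numRadius (norm_smul_inv_norm hT)
    _ ≤ ‖(‖T‖⁻¹ : 𝕜)‖ * numRadius 𝕜 X T * ‖T‖ := by gcongr; exact numRadius_smul_le _ T
    _ = numRadius 𝕜 X T := by simp [field]

end NumericalRadius

section Summands

variable {𝕜 : Type*} [RCLike 𝕜] {X Y : Type*} [NormedAddCommGroup X] [NormedSpace 𝕜 X]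
  [NormedAddCommGroup Y] [NormedSpace 𝕜 Y]

/-- `X = J(Y) ⊕_∞ ker P`. -/
structure IsMSummand (J : Y →L[𝕜] X) (P : X →L[𝕜] Y) : Prop where
  left_inv : ∀ y, P (J y) = y
  norm_eq_max : ∀ x, ‖x‖ = max ‖P x‖ ‖x - J (P x)‖

/-- `X = J(Y) ⊕₁ ker P`. -/
structure IsLSummand (J : Y →L[𝕜] X) (P : X →L[𝕜] Y) : Prop where
  left_inv : ∀ y, P (J y) = y
  norm_eq_add : ∀ x, ‖x‖ = ‖P x‖ + ‖x - J (P x)‖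

variable {J : Y →L[𝕜] X} {P : X →L[𝕜] Y}

namespace IsMSummand

theorem norm_map (h : IsMSummand J P) (y : Y) : ‖J y‖ = ‖y‖ := by
  simpa [h.left_inv] using h.norm_eq_max (J y)

theorem norm_proj_le (h : IsMSummand J P) (x : X) : ‖P x‖ ≤ ‖x‖ :=
  h.norm_eq_max x ▸ le_max_left _ _

theorem norm_sub_map_proj_le (h : IsMSummand J P) (x : X) : ‖x - J (P x)‖ ≤ ‖x‖ :=
  h.norm_eq_max x ▸ le_max_right _ _

theorem injective (h : IsMSummand J P) : Function.Injective J :=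
  Function.LeftInverse.injective h.left_inv

theorem codRestrict (h : IsMSummand J P) (V : Submodule 𝕜 X) (hJV : ∀ y, J y ∈ V) :
    IsMSummand (J.codRestrict V hJV) (P ∘L V.subtypeL) where
  left_inv := h.left_inv
  norm_eq_max v := h.norm_eq_max v

end IsMSummand

namespace IsLSummand

theorem norm_map (h : IsLSummand J P) (y : Y) : ‖J y‖ = ‖y‖ := by
  simpa [h.left_inv] using h.norm_eq_add (J y)

theorem norm_proj_le (h : IsLSummand J P) (x : X) : ‖P x‖ ≤ ‖x‖ :=
  h.norm_eq_add x ▸ le_add_of_nonneg_right (norm_nonneg _)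

theorem injective (h : IsLSummand J P) : Function.Injective J :=
  Function.LeftInverse.injective h.left_inv

end IsLSummand

end Summands

theorem RCLike.exists_norm_le_one_mul_eq_norm {𝕜 : Type*} [RCLike 𝕜] (c : 𝕜) :
    ∃ a : 𝕜, ‖a‖ ≤ 1 ∧ a * c = ‖c‖ := by
  rcases eq_or_ne c 0 with rfl | hc
  · exact ⟨0, by simp⟩
  refine ⟨(‖c‖ : 𝕜)⁻¹ * (starRingEnd 𝕜) c, by simp [norm_ne_zero_iff.2 hc], ?_⟩
  rw [mul_assoc, RCLike.conj_mul]
  have : (‖c‖ : 𝕜) ≠ 0 := by simpa using hc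
  field_simp

section EasyDirection

variable {𝕜 : Type*} [RCLike 𝕜] {X Y : Type*} [NormedAddCommGroup X] [NormedSpace 𝕜 X]
  [NormedAddCommGroup Y] [NormedSpace 𝕜 Y] {J : Y →L[𝕜] X} {P : X →L[𝕜] Y}

theorem opNorm_comp_comp_eq (hPJ : ∀ y, P (J y) = y) (hJ : ∀ y, ‖J y‖ = ‖y‖)
    (hP : ∀ x, ‖P x‖ ≤ ‖x‖) (S : Y →L[𝕜] Y) : ‖J ∘L S ∘L P‖ = ‖S‖ := by
  refine le_antisymm ((J ∘L S ∘L P).opNorm_le_bound (norm_nonneg S) fun x => ?_)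
    (S.opNorm_le_bound (norm_nonneg _) fun y => ?_)
  · calc ‖J (S (P x))‖ = ‖S (P x)‖ := hJ _
      _ ≤ ‖S‖ * ‖x‖ := S.le_opNorm_of_le (hP x)
  · calc ‖S y‖ = ‖(J ∘L S ∘L P) (J y)‖ := by simp [hPJ, hJ]
      _ ≤ ‖J ∘L S ∘L P‖ * ‖y‖ := (J ∘L S ∘L P).le_opNorm_of_le (hJ y).le

/-- The norming functional `f` splits as `f ∘ J` on `J(Y)` plus a part on the complement; the
hypothesis forces `f ∘ J` to norm `P x` up to scaling. -/
theorem norm_apply_comp_comp_le_numRadius (S : Y →L[𝕜] Y) {x : X} {f : StrongDual 𝕜 X}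
    (hfx : f x = 1) (h : ‖f ∘L J‖ * ‖P x‖ + ‖f (x - J (P x))‖ ≤ 1) :
    ‖f ((J ∘L S ∘L P) x)‖ ≤ numRadius 𝕜 Y S := by
  set g := f ∘L J
  have hsplit : RCLike.re (g (P x)) + RCLike.re (f (x - J (P x))) = 1 := by
    simp [g, hfx]
  have hle : ‖g‖ * ‖P x‖ ≤ RCLike.re (g (P x)) := by
    linarith [RCLike.re_le_norm (f (x - J (P x)))]
  have hre : RCLike.re (g (P x)) = ‖g‖ * ‖P x‖ :=
    le_antisymm ((RCLike.re_le_norm _).trans (g.le_opNorm _)) hle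
  have hgPx : g (P x) = ((‖g‖ * ‖P x‖ : ℝ) : 𝕜) := by
    rw [← hre, RCLike.re_eq_self_of_le ((g.le_opNorm _).trans hle)]
  calc ‖g (S (P x))‖ ≤ ‖g‖ * ‖P x‖ * numRadius 𝕜 Y S := norm_apply_le_mul_numRadius S hgPx
    _ ≤ 1 * numRadius 𝕜 Y S := by
        gcongr
        · exact numRadius_nonneg S
        · linarith [norm_nonneg (f (x - J (P x)))]
    _ = numRadius 𝕜 Y S := one_mul _

theorem numIndex_le_of_retraction [Nontrivial Y] (hPJ : ∀ y, P (J y) = y)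
    (hJ : ∀ y, ‖J y‖ = ‖y‖) (hP : ∀ x, ‖P x‖ ≤ ‖x‖)
    (hdual : ∀ (x : X) (f : StrongDual 𝕜 X), ‖x‖ = 1 → ‖f‖ = 1 →
      ‖f ∘L J‖ * ‖P x‖ + ‖f (x - J (P x))‖ ≤ 1) :
    numIndex 𝕜 X ≤ numIndex 𝕜 Y := by
  refine le_csInf ⟨_, ContinuousLinearMap.id 𝕜 Y, ContinuousLinearMap.norm_id, rfl⟩ ?_
  rintro _ ⟨S, hS, rfl⟩
  calc numIndex 𝕜 X ≤ numRadius 𝕜 X (J ∘L S ∘L P) :=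
        numIndex_le_numRadius (by rw [opNorm_comp_comp_eq hPJ hJ hP, hS])
    _ ≤ numRadius 𝕜 Y S := numRadius_le (numRadius_nonneg S) fun x f hx hf hfx =>
        norm_apply_comp_comp_le_numRadius S hfx (hdual x f hx hf)

/-- The dual of an `ℓ_∞`-sum is an `ℓ₁`-sum. -/
theorem IsMSummand.norm_comp_add_norm_apply_le (h : IsMSummand J P) {f : StrongDual 𝕜 X}
    (hf : ‖f‖ ≤ 1) {z : X} (hPz : P z = 0) (hz : ‖z‖ ≤ 1) : ‖f ∘L J‖ + ‖f z‖ ≤ 1 := by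
  have hfz : ‖f z‖ ≤ 1 := (f.le_opNorm z).trans (by nlinarith [norm_nonneg f, norm_nonneg z])
  suffices ‖f ∘L J‖ ≤ 1 - ‖f z‖ by linarith
  refine (f ∘L J).opNorm_le_bound (by linarith) fun y => ?_
  obtain ⟨a, ha, hay⟩ := RCLike.exists_norm_le_one_mul_eq_norm (f (J y))
  obtain ⟨b, hb, hbz⟩ := RCLike.exists_norm_le_one_mul_eq_norm (f z)
  -- the phases `a`, `b` make both summands of `f t` nonnegative, while `‖t‖ ≤ ‖y‖` by the max-norm
  set t := J (a • y) + ((‖y‖ : 𝕜) * b) • z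
  have hPt : P t = a • y := by simp [t, h.left_inv, hPz]
  have ht : ‖t‖ ≤ ‖y‖ := by
    rw [h.norm_eq_max, hPt]
    refine max_le ?_ ?_
    · rw [norm_smul]
      exact mul_le_of_le_one_left (norm_nonneg y) ha
    · simp only [t, add_sub_cancel_left, norm_smul, norm_mul, RCLike.norm_coe_norm]
      calc ‖y‖ * ‖b‖ * ‖z‖ ≤ ‖y‖ * 1 * 1 := by gcongr
        _ = ‖y‖ := by ring
  have hft : f t = ((‖f (J y)‖ + ‖y‖ * ‖f z‖ : ℝ) : 𝕜) := by
    simp only [t, map_add, map_smul, smul_eq_mul, hay, mul_assoc, hbz]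
    push_cast
    ring
  have hnorm : ‖f t‖ = ‖f (J y)‖ + ‖y‖ * ‖f z‖ := by
    rw [hft, RCLike.norm_ofReal, abs_of_nonneg (by positivity)]
  have : ‖f t‖ ≤ ‖y‖ := (f.le_of_opNorm_le hf t).trans (by linarith)
  change ‖f (J y)‖ ≤ (1 - ‖f z‖) * ‖y‖
  nlinarith

theorem IsMSummand.numIndex_le [Nontrivial Y] (h : IsMSummand J P) :
    numIndex 𝕜 X ≤ numIndex 𝕜 Y := by
  refine numIndex_le_of_retraction h.left_inv h.norm_map h.norm_proj_le fun x f hx hf => ?_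
  have hPz : P (x - J (P x)) = 0 := by simp [h.left_inv]
  have := h.norm_comp_add_norm_apply_le hf.le hPz (hx ▸ h.norm_sub_map_proj_le x)
  have hPx : ‖P x‖ ≤ 1 := hx ▸ h.norm_proj_le x
  nlinarith [norm_nonneg (f ∘L J)]

theorem IsLSummand.numIndex_le [Nontrivial Y] (h : IsLSummand J P) :
    numIndex 𝕜 X ≤ numIndex 𝕜 Y := by
  refine numIndex_le_of_retraction h.left_inv h.norm_map h.norm_proj_le fun x f hx hf => ?_
  have hfJ : ‖f ∘L J‖ ≤ 1 := (f.opNorm_comp_le J).trans <| by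
    rw [hf, one_mul]
    exact J.opNorm_le_bound zero_le_one fun y => by rw [one_mul, h.norm_map]
  calc ‖f ∘L J‖ * ‖P x‖ + ‖f (x - J (P x))‖ ≤ 1 * ‖P x‖ + 1 * ‖x - J (P x)‖ := by
        gcongr
        exact f.le_of_opNorm_le hf.le _
    _ = 1 := by rw [one_mul, one_mul, ← h.norm_eq_add, hx]

end EasyDirection

section HardDirection

variable {𝕜 : Type*} [RCLike 𝕜] {X Y : Type*} [NormedAddCommGroup X] [NormedSpace 𝕜 X]
  [NormedAddCommGroup Y] [NormedSpace 𝕜 Y]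

theorem exists_norm_eq_one_eq_norm_smul [Nontrivial Y] (y : Y) :
    ∃ u : Y, ‖u‖ = 1 ∧ y = (‖y‖ : 𝕜) • u := by
  rcases eq_or_ne y 0 with rfl | hy
  · obtain ⟨w, hw⟩ := exists_ne (0 : Y)
    exact ⟨_, norm_smul_inv_norm (𝕜 := 𝕜) hw, by simp⟩
  · exact ⟨_, norm_smul_inv_norm (𝕜 := 𝕜) hy, by simp [smul_smul, norm_ne_zero_iff.2 hy]⟩

/-- Convexity of `‖A · + b‖` on the segment from `-u` to `u`, where `y ∈ [0, 1] • u`. -/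
theorem exists_norm_eq_one_norm_add_le {W : Type*} [NormedAddCommGroup W] [NormedSpace 𝕜 W]
    [Nontrivial Y] (A : Y →L[𝕜] W) (b : W) {y : Y} (hy : ‖y‖ ≤ 1) :
    ∃ u : Y, ‖u‖ = 1 ∧ ‖A y + b‖ ≤ ‖A u + b‖ := by
  obtain ⟨u, hu, hyu⟩ := exists_norm_eq_one_eq_norm_smul (𝕜 := 𝕜) y
  set t := ‖y‖
  have hcomb : (2 : 𝕜) • (A y + b) =
      ((1 + t : ℝ) : 𝕜) • (A u + b) + ((1 - t : ℝ) : 𝕜) • (A (-u) + b) := by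
    rw [hyu, map_smul, map_neg]
    push_cast
    module
  have hle : 2 * ‖A y + b‖ ≤ (1 + t) * ‖A u + b‖ + (1 - t) * ‖A (-u) + b‖ := by
    have := norm_add_le (((1 + t : ℝ) : 𝕜) • (A u + b)) (((1 - t : ℝ) : 𝕜) • (A (-u) + b))
    rwa [← hcomb, norm_smul, norm_smul, norm_smul, RCLike.norm_ofReal, RCLike.norm_ofReal,
      abs_of_nonneg (by positivity), abs_of_nonneg (by linarith), RCLike.norm_ofNat] at this
  have ht : 0 ≤ t := norm_nonneg y
  rcases le_total ‖A u + b‖ ‖A (-u) + b‖ with h | h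
  · exact ⟨-u, by rwa [norm_neg], by nlinarith⟩
  · exact ⟨u, hu, by nlinarith⟩

theorem numRadius_comp_comp_le (Φ : Y →L[𝕜] X) (Ψ : X →L[𝕜] Y) (hΦ : ∀ y, ‖Φ y‖ ≤ ‖y‖)
    (hΨ : ∀ x, ‖Ψ x‖ ≤ ‖x‖) (hΨΦ : ∀ y, Ψ (Φ y) = y) (T : X →L[𝕜] X) :
    numRadius 𝕜 Y (Ψ ∘L T ∘L Φ) ≤ numRadius 𝕜 X T := by
  refine numRadius_le (numRadius_nonneg T) fun y g hy hg hgy => ?_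
  have hgΨ : ‖g ∘L Ψ‖ ≤ 1 := (g.opNorm_comp_le Ψ).trans <| by
    rw [hg, one_mul]
    exact Ψ.opNorm_le_bound zero_le_one fun x => by rw [one_mul]; exact hΨ x
  exact norm_apply_le_numRadius T (hy ▸ hΦ y) hgΨ (by simp [hΨΦ, hgy])

namespace IsMSummand

variable {J : Y →L[𝕜] X} {P : X →L[𝕜] Y}

/-- `Φ = J + c ⊗ z` is a second isometric section of `P` which sees the value of `P T` at the
point `J u + z` of the unit ball. -/
theorem exists_norm_le_numRadius_le [Nontrivial Y] (h : IsMSummand J P) (T : X →L[𝕜] X)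
    {x : X} (hx : ‖x‖ ≤ 1) :
    ∃ S : Y →L[𝕜] Y, ‖P (T x)‖ ≤ ‖S‖ ∧ numRadius 𝕜 Y S ≤ numRadius 𝕜 X T := by
  set z := x - J (P x)
  have hPz : P z = 0 := by simp [z, h.left_inv]
  have hz : ‖z‖ ≤ 1 := (h.norm_sub_map_proj_le x).trans hx
  obtain ⟨u, hu, hle⟩ :=
    exists_norm_eq_one_norm_add_le (P ∘L T ∘L J) (P (T z)) ((h.norm_proj_le x).trans hx)
  obtain ⟨c, hc, hcu⟩ := exists_dual_vector 𝕜 u (norm_ne_zero_iff.1 (by simp [hu]))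
  set Φ := J + c.smulRight z
  have hPΦ : ∀ y, P (Φ y) = y := by simp [Φ, h.left_inv, hPz]
  have hΦ : ∀ y, ‖Φ y‖ ≤ ‖y‖ := by
    intro y
    rw [h.norm_eq_max, hPΦ]
    refine max_le le_rfl ?_
    simp only [Φ, add_apply, ContinuousLinearMap.smulRight_apply, add_sub_cancel_left, norm_smul]
    have hcy : ‖c y‖ ≤ ‖y‖ := (c.le_of_opNorm_le hc.le y).trans_eq (one_mul _)
    calc ‖c y‖ * ‖z‖ ≤ ‖y‖ * 1 := mul_le_mul hcy hz (norm_nonneg z) (norm_nonneg y)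
      _ = ‖y‖ := mul_one _
  refine ⟨P ∘L T ∘L Φ, ?_, numRadius_comp_comp_le Φ P hΦ h.norm_proj_le hPΦ T⟩
  calc ‖P (T x)‖ = ‖(P ∘L T ∘L J) (P x) + P (T z)‖ := by simp [z]
    _ ≤ ‖(P ∘L T ∘L J) u + P (T z)‖ := hle
    _ = ‖(P ∘L T ∘L Φ) u‖ := by simp [Φ, hcu, hu]
    _ ≤ ‖P ∘L T ∘L Φ‖ := (P ∘L T ∘L Φ).unit_le_opNorm u hu.le

end IsMSummand

namespace IsLSummand

variable {J : Y →L[𝕜] X} {P : X →L[𝕜] Y}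

/-- `Ψ = P + f(1 - JP) ⊗ w` is a second contractive left inverse of `J` which sees all of
`T (J u)`, not only its component `P (T (J u))`. -/
theorem exists_norm_le_numRadius_le [Nontrivial Y] (h : IsLSummand J P) (T : X →L[𝕜] X)
    {u : Y} (hu : ‖u‖ ≤ 1) :
    ∃ S : Y →L[𝕜] Y, ‖T (J u)‖ ≤ ‖S‖ ∧ numRadius 𝕜 Y S ≤ numRadius 𝕜 X T := by
  set v := T (J u)
  obtain ⟨f, hf, hfv⟩ := exists_dual_vector'' 𝕜 (v - J (P v))
  obtain ⟨w, hw, hPv⟩ := exists_norm_eq_one_eq_norm_smul (𝕜 := 𝕜) (P v)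
  set Ψ := P + (f ∘L (ContinuousLinearMap.id 𝕜 X - J ∘L P)).smulRight w
  have hΨJ : ∀ y, Ψ (J y) = y := by simp [Ψ, h.left_inv]
  have hΨ : ∀ x, ‖Ψ x‖ ≤ ‖x‖ := by
    intro x
    calc ‖Ψ x‖ = ‖P x + f (x - J (P x)) • w‖ := by simp [Ψ]
      _ ≤ ‖P x‖ + ‖x - J (P x)‖ := by
        refine (norm_add_le _ _).trans ?_
        rw [norm_smul, hw, mul_one]
        gcongr
        exact (f.le_of_opNorm_le hf _).trans_eq (one_mul _)
      _ = ‖x‖ := (h.norm_eq_add x).symm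
  refine ⟨Ψ ∘L T ∘L J, ?_, numRadius_comp_comp_le J Ψ (fun y => (h.norm_map y).le) hΨ hΨJ T⟩
  have hSu : (Ψ ∘L T ∘L J) u = ((‖P v‖ + ‖v - J (P v)‖ : ℝ) : 𝕜) • w := by
    change P v + f (v - J (P v)) • w = _
    rw [hfv]
    nth_rw 1 [hPv]
    rw [← add_smul]
    push_cast
    rfl
  calc ‖v‖ = ‖P v‖ + ‖v - J (P v)‖ := h.norm_eq_add v
    _ = ‖(Ψ ∘L T ∘L J) u‖ := by
      rw [hSu, norm_smul, hw, mul_one, RCLike.norm_ofReal, abs_of_nonneg (by positivity)]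
    _ ≤ ‖Ψ ∘L T ∘L J‖ := (Ψ ∘L T ∘L J).le_opNorm_of_le hu |>.trans_eq (mul_one _)

end IsLSummand

end HardDirection

section Families

variable {𝕜 : Type*} [RCLike 𝕜] {ι : Type*} {E : ι → Type*} [∀ i, NormedAddCommGroup (E i)]
  [∀ i, NormedSpace 𝕜 (E i)] {X : Type*} [NormedAddCommGroup X] [NormedSpace 𝕜 X]

theorem iInf_numIndex_le_of_forall_exists [Nontrivial X]
    (h : ∀ T : X →L[𝕜] X, ‖T‖ = 1 → ∀ r < 1,
      ∃ i, ∃ S : E i →L[𝕜] E i, r < ‖S‖ ∧ numRadius 𝕜 (E i) S ≤ numRadius 𝕜 X T) :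
    ⨅ i, numIndex 𝕜 (E i) ≤ numIndex 𝕜 X := by
  refine le_csInf ⟨_, ContinuousLinearMap.id 𝕜 X, ContinuousLinearMap.norm_id, rfl⟩ ?_
  rintro _ ⟨T, hT, rfl⟩
  have hlim : Tendsto (fun r : ℝ => r * ⨅ i, numIndex 𝕜 (E i)) (𝓝[<] 1)
      (𝓝 (⨅ i, numIndex 𝕜 (E i))) := by
    simpa using ((tendsto_id (x := 𝓝 (1 : ℝ))).mul_const (⨅ i, numIndex 𝕜 (E i))).mono_left
      nhdsWithin_le_nhds
  refine le_of_tendsto hlim ?_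
  filter_upwards [Ioo_mem_nhdsLT zero_lt_one] with r ⟨hr0, hr1⟩
  obtain ⟨i, S, hS, hST⟩ := h T hT r hr1
  have hbdd : BddBelow (Set.range fun i => numIndex 𝕜 (E i)) :=
    ⟨0, by rintro _ ⟨j, rfl⟩; exact numIndex_nonneg⟩
  calc r * ⨅ i, numIndex 𝕜 (E i) ≤ ‖S‖ * numIndex 𝕜 (E i) :=
        mul_le_mul hS.le (ciInf_le hbdd i) (Real.iInf_nonneg fun _ => numIndex_nonneg)
          (norm_nonneg S)
    _ ≤ numRadius 𝕜 (E i) S := by rw [mul_comm]; exact numIndex_mul_norm_le_numRadius S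
    _ ≤ numRadius 𝕜 X T := hST

variable [Nonempty ι] [∀ i, Nontrivial (E i)] (J : ∀ i, E i →L[𝕜] X) (P : ∀ i, X →L[𝕜] E i)

theorem iInf_numIndex_le_of_isMSummand (h : ∀ i, IsMSummand (J i) (P i))
    (hP : ∀ x : X, ∀ r < ‖x‖, ∃ i, r < ‖P i x‖) :
    ⨅ i, numIndex 𝕜 (E i) ≤ numIndex 𝕜 X := by
  have : Nontrivial X := (h (Classical.arbitrary ι)).injective.nontrivial
  refine iInf_numIndex_le_of_forall_exists fun T hT r hr => ?_
  obtain ⟨x, hx, hTx⟩ := T.exists_lt_apply_of_lt_opNorm (hT ▸ hr)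
  obtain ⟨i, hi⟩ := hP (T x) r hTx
  obtain ⟨S, hS, hST⟩ := (h i).exists_norm_le_numRadius_le T hx.le
  exact ⟨i, S, hi.trans_le hS, hST⟩

theorem iInf_numIndex_le_of_isLSummand (h : ∀ i, IsLSummand (J i) (P i))
    (hJ : ∀ T : X →L[𝕜] X, ∀ r < ‖T‖, ∃ i, r < ‖T ∘L J i‖) :
    ⨅ i, numIndex 𝕜 (E i) ≤ numIndex 𝕜 X := by
  have : Nontrivial X := (h (Classical.arbitrary ι)).injective.nontrivial
  refine iInf_numIndex_le_of_forall_exists fun T hT r hr => ?_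
  obtain ⟨i, hi⟩ := hJ T r (hT ▸ hr)
  obtain ⟨u, hu, hTu⟩ := (T ∘L J i).exists_lt_apply_of_lt_opNorm hi
  obtain ⟨S, hS, hST⟩ := (h i).exists_norm_le_numRadius_le T hu.le
  exact ⟨i, S, hTu.trans_le hS, hST⟩

end Families

section Sequences

variable {𝕜 : Type*} [RCLike 𝕜] {ι : Type*} {E : ι → Type*} [∀ i, NormedAddCommGroup (E i)]
  [∀ i, NormedSpace 𝕜 (E i)]

namespace lp

theorem exists_lt_norm_apply [Nonempty ι] {x : lp E ∞} {r : ℝ} (hr : r < ‖x‖) :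
    ∃ i, r < ‖x i‖ :=
  exists_lt_of_lt_ciSup (hr.trans_eq (lp.norm_eq_ciSup x))

variable [DecidableEq ι]

theorem norm_eq_max_norm_sub_single (x : lp E ∞) (i : ι) :
    ‖x‖ = max ‖x i‖ ‖x - lp.single ∞ i (x i)‖ := by
  have hsub : ∀ j ≠ i, (x - lp.single ∞ i (x i)) j = x j := fun j hj => by
    simp [Pi.single_eq_of_ne hj]
  have hle := lp.norm_apply_le_norm (E := E) ENNReal.top_ne_zero
  refine le_antisymm
    (lp.norm_le_of_forall_le ((norm_nonneg _).trans (le_max_left _ _)) fun j => ?_)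
    (max_le (hle x i) (lp.norm_le_of_forall_le (norm_nonneg x) fun j => ?_))
  · rcases eq_or_ne j i with rfl | hj
    · exact le_max_left _ _
    · exact hsub j hj ▸ (hle _ j).trans (le_max_right _ _)
  · rcases eq_or_ne j i with rfl | hj
    · simp
    · exact (hsub j hj).symm ▸ hle x j

theorem norm_eq_norm_add_norm_sub_single (x : lp E 1) (i : ι) :
    ‖x‖ = ‖x i‖ + ‖x - lp.single 1 i (x i)‖ := by
  have := lp.norm_sub_norm_compl_sub_single (by norm_num) x {i}
  simp only [ENNReal.toReal_one, Real.rpow_one, Finset.sum_singleton] at this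
  linarith

theorem isMSummand_single (i : ι) :
    IsMSummand (lp.singleContinuousLinearMap 𝕜 E ∞ i) (lp.evalCLM 𝕜 E ∞ i) where
  left_inv := lp.single_apply_self ∞ i
  norm_eq_max x := norm_eq_max_norm_sub_single x i

theorem isLSummand_single (i : ι) :
    IsLSummand (lp.singleContinuousLinearMap 𝕜 E 1 i) (lp.evalCLM 𝕜 E 1 i) where
  left_inv := lp.single_apply_self 1 i
  norm_eq_add x := norm_eq_norm_add_norm_sub_single x i

theorem opNorm_le_of_forall_opNorm_comp_single_le {F : Type*} [NormedAddCommGroup F]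
    [NormedSpace 𝕜 F] (T : lp E 1 →L[𝕜] F) {c : ℝ} (hc : 0 ≤ c)
    (h : ∀ i, ‖T ∘L lp.singleContinuousLinearMap 𝕜 E 1 i‖ ≤ c) : ‖T‖ ≤ c := by
  refine T.opNorm_le_bound hc fun x => ?_
  have hx : HasSum (fun i => ‖x i‖) ‖x‖ := by
    simpa using lp.hasSum_norm (p := 1) (by norm_num) x
  exact ((lp.hasSum_single ENNReal.one_ne_top x).mapL T).norm_le_of_bounded (hx.mul_left c)
    fun i => (T ∘L lp.singleContinuousLinearMap 𝕜 E 1 i).le_of_opNorm_le (h i) (x i)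

theorem exists_lt_opNorm_comp_single [Nonempty ι] {F : Type*} [NormedAddCommGroup F]
    [NormedSpace 𝕜 F] (T : lp E 1 →L[𝕜] F) {r : ℝ} (hr : r < ‖T‖) :
    ∃ i, r < ‖T ∘L lp.singleContinuousLinearMap 𝕜 E 1 i‖ := by
  by_contra! h
  exact hr.not_ge (opNorm_le_of_forall_opNorm_comp_single_le T
    ((norm_nonneg _).trans (h (Classical.arbitrary ι))) h)

end lp

theorem single_mem_c0Sum [DecidableEq ι] (i : ι) (a : E i) : lp.single ∞ i a ∈ c0Sum 𝕜 E :=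
  tendsto_const_nhds.congr' <| (eventually_cofinite_ne i).mono fun j hj => by
    simp [Pi.single_eq_of_ne hj]

end Sequences

theorem numIndex_sums_general (𝕜 : Type*) [RCLike 𝕜] {ι : Type*} [Nonempty ι] (E : ι → Type*)
    [∀ i, NormedAddCommGroup (E i)] [∀ i, NormedSpace 𝕜 (E i)]
    [∀ i, Nontrivial (E i)] :
    numIndex 𝕜 (c0Sum 𝕜 E) = ⨅ i, numIndex 𝕜 (E i) ∧
    numIndex 𝕜 (lp E 1) = ⨅ i, numIndex 𝕜 (E i) ∧
    numIndex 𝕜 (lp E ∞) = ⨅ i, numIndex 𝕜 (E i) := by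
  classical
  have hM := lp.isMSummand_single (𝕜 := 𝕜) (E := E)
  have hM₀ i := (hM i).codRestrict (c0Sum 𝕜 E) (single_mem_c0Sum i)
  have hL := lp.isLSummand_single (𝕜 := 𝕜) (E := E)
  refine ⟨le_antisymm (le_ciInf fun i => (hM₀ i).numIndex_le) ?_,
    le_antisymm (le_ciInf fun i => (hL i).numIndex_le) ?_,
    le_antisymm (le_ciInf fun i => (hM i).numIndex_le) ?_⟩
  · exact iInf_numIndex_le_of_isMSummand _ _ hM₀ fun _ _ => lp.exists_lt_norm_apply
  · exact iInf_numIndex_le_of_isLSummand _ _ hL fun T _ => lp.exists_lt_opNorm_comp_single T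
  · exact iInf_numIndex_le_of_isMSummand _ _ hM fun _ _ => lp.exists_lt_norm_apply

/-- The numerical index of the `c₀`-, `ℓ₁`- and `ℓ_∞`-sums of a nonempty family of nonzero
Banach spaces all coincide with the infimum of the numerical indices of the summands. -/
theorem numIndex_sums (𝕜 : Type*) [RCLike 𝕜] {ι : Type*} [Nonempty ι] (E : ι → Type*)
    [∀ i, NormedAddCommGroup (E i)] [∀ i, NormedSpace 𝕜 (E i)]
    [∀ i, CompleteSpace (E i)] [∀ i, Nontrivial (E i)] :
    numIndex 𝕜 (c0Sum 𝕜 E) = ⨅ i, numIndex 𝕜 (E i) ∧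
    numIndex 𝕜 (lp E 1) = ⨅ i, numIndex 𝕜 (E i) ∧
    numIndex 𝕜 (lp E ∞) = ⨅ i, numIndex 𝕜 (E i) :=
  numIndex_sums_general 𝕜 E
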